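/- arXiv:2502.20774 — 4 statements merged into one kernel-verified Lean document; each statement's English description precedes it below -/
import Mathlib

section
/- A word is a tangram (every letter occurs an even number of times) if and only if it can be written as a concatenation of pieces that can be partitioned into two groups, each group concatenating (in some order) to the same word. -/
theorem flatten_map_singleton {α : Type*} (l : List α) :
    (l.map (fun a => [a])).flatten = l := by
  induction l with
  | nil => rfl
  | cons a t ih => simpa using ih

/-- A word is a tangram (every letter occurs an even number of times) iff it can be cut
into pieces that can be partitioned into two groups, each concatenating (in some order)
to the same word. -/
theorem stmt_1 {α : Type*} [DecidableEq α] (w : List α) :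
    (∀ a : α, Even (w.count a)) ↔
      ∃ pieces g₁ g₂ : List (List α),
        w = pieces.flatten ∧ (g₁ ++ g₂).Perm pieces ∧ g₁.flatten = g₂.flatten := by
  constructor
  · intro h
    set half : List α := w.dedup.flatMap (fun a => List.replicate (w.count a / 2) a) with hhalf
    have hcount : ∀ a : α, half.count a = w.count a / 2 := by
      intro a
      rw [hhalf, List.count_flatMap]
      have : ∀ f : α → ℕ, (List.map f w.dedup).sum = ∑ b ∈ w.toFinset, f b := by
        intro f
        rw [← List.sum_toFinset _ w.nodup_dedup]
        congr 1
        ext x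
        simp
      rw [this]
      simp only [Function.comp, List.count_replicate, beq_iff_eq]
      rw [Finset.sum_ite_eq']
      by_cases ha : a ∈ w
      · simp [ha]
      · simp [ha, List.count_eq_zero_of_not_mem ha]
    refine ⟨w.map (fun a => [a]), half.map (fun a => [a]), half.map (fun a => [a]), (flatten_map_singleton w).symm, ?_, rfl⟩
    have hp : (half ++ half).Perm w := by
      rw [List.perm_iff_count]
      intro a
      rw [List.count_append, hcount a]
      obtain ⟨r, hr⟩ := h a
      omega
    simpa [← List.map_append] using hp.map (fun a => [a])
  · rintro ⟨pieces, g₁, g₂, rfl, hperm, heq⟩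
    intro a
    have h1 : pieces.flatten.count a = ((g₁ ++ g₂).map (List.count a)).sum := by
      rw [List.count_flatten]
      exact (List.Perm.sum_eq ((hperm.map (List.count a)))).symm
    rw [h1, List.map_append, List.sum_append]
    have : (g₁.map (List.count a)).sum = (g₂.map (List.count a)).sum := by
      rw [← List.count_flatten, ← List.count_flatten, heq]
    rw [← this]
    exact ⟨_, rfl⟩
end

section
/- Let a,b,c,d be positive integers such that each of the following holds: (a+b+c+d ≤ 8 or 3a ≤ b+c+d), (a+b+2c+d ≤ 8 or 3b ≤ a+2c+d), (a+c+d ≤ 8 or 3c ≤ a+d), and (a+b+c+d ≤ 8 or 3d ≤ a+b+c). Then a+b+c+d ≤ 12. -/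
theorem stmt_9 (a b c d : ℕ) (ha : 0 < a) (hb : 0 < b) (hc : 0 < c) (hd : 0 < d)
    (h1 : a + b + c + d ≤ 8 ∨ 3 * a ≤ b + c + d)
    (h2 : a + b + 2 * c + d ≤ 8 ∨ 3 * b ≤ a + 2 * c + d)
    (h3 : a + c + d ≤ 8 ∨ 3 * c ≤ a + d)
    (h4 : a + b + c + d ≤ 8 ∨ 3 * d ≤ a + b + c) :
    a + b + c + d ≤ 12 := by
  rcases h1 with h1|h1 <;> rcases h2 with h2|h2 <;> rcases h3 with h3|h3 <;> rcases h4 with h4|h4 <;> omega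
end

section
/- Let a,b,c,d be positive integers satisfying: (a+b+c+d ≤ 8 or 3a ≤ b+c+d), (a+b+2c+d ≤ 8 or 3b ≤ a+2c+d), (a+c+d ≤ 8 or 3c ≤ a+d), and (a+b+c+d ≤ 8 or 3d ≤ a+b+c). Then a+c+d ≤ 8. -/
theorem stmt_10 (a b c d : ℕ) (ha : 0 < a) (hb : 0 < b) (hc : 0 < c) (hd : 0 < d)
    (h1 : a + b + c + d ≤ 8 ∨ 3 * a ≤ b + c + d)
    (h2 : a + b + 2 * c + d ≤ 8 ∨ 3 * b ≤ a + 2 * c + d)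
    (h3 : a + c + d ≤ 8 ∨ 3 * c ≤ a + d)
    (h4 : a + b + c + d ≤ 8 ∨ 3 * d ≤ a + b + c) :
    a + c + d ≤ 8 := by rcases h1 with h1|h1 <;> rcases h2 with h2|h2 <;> rcases h3 with h3|h3 <;> rcases h4 with h4|h4 <;> omega
end

section
/- Any occurrence m of the pattern ABACBC in a (5/4^+, 9)-free word satisfies |m(ABACBC)| ≤ 30; equivalently, with a=|m(A)|, b=|m(B)|, c=|m(C)|, one has a+b+c ≤ 15. -/
/-- A word is `(5/4⁺, n)`-free if every repetition `uvu` (u nonempty) with period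
`|uv| ≥ n` has exponent `|uvu|/|uv| ≤ 5/4`. -/
def IsFree54 {α : Type*} (n : ℕ) (w : List α) : Prop :=
  ∀ u v : List α, u ≠ [] → (u ++ v ++ u) <:+: w → n ≤ (u ++ v).length →
    4 * (u ++ v ++ u).length ≤ 5 * (u ++ v).length

/-- Any occurrence of the pattern ABACBC in a (5/4⁺,9)-free word has length at most 30. -/
theorem stmt_14 {α : Type*} (z : List α) (hz : IsFree54 9 z)
    (a b c : List α) (ha : a ≠ []) (hb : b ≠ []) (hc : c ≠ [])
    (hocc : (a ++ b ++ a ++ c ++ b ++ c) <:+: z) :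
    (a ++ b ++ a ++ c ++ b ++ c).length ≤ 30 := by
  have i1 : (a ++ b ++ a) <:+: z :=
    List.IsInfix.trans ⟨[], c ++ b ++ c, by simp⟩ hocc
  have i2 : (b ++ (a ++ c) ++ b) <:+: z :=
    List.IsInfix.trans ⟨a, c, by simp⟩ hocc
  have i3 : (c ++ b ++ c) <:+: z :=
    List.IsInfix.trans ⟨a ++ b ++ a, [], by simp⟩ hocc
  have h1 := fun h => hz a b ha i1 h
  have h2 := fun h => hz b (a ++ c) hb i2 h
  have h3 := fun h => hz c b hc i3 h
  have la : 1 ≤ a.length := List.length_pos_iff.mpr ha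
  have lb : 1 ≤ b.length := List.length_pos_iff.mpr hb
  have lc : 1 ≤ c.length := List.length_pos_iff.mpr hc
  simp only [List.length_append] at h1 h2 h3 ⊢
  omega
end
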